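/- arXiv:2509.09589 — 2 statements merged into one kernel-verified Lean document; each statement's English description precedes it below -/
import Mathlib

section
/- There exist a threshold n₀ ≥ 2 and a constant δ ∈ (0,1), both depending only on A_1, A_2, L, d, α and θ, such that m_j^{(n)} ≤ 1 − δ for all n ≥ n₀ and all 1 ≤ j ≤ n − 1. -/
open MeasureTheory ProbabilityTheory Filter Finset
open scoped ENNReal Classical

noncomputable section

/-- The hierarchical lattice `H^d_L`: the direct sum of countably many copies of `(ZMod L)^d`. -/
abbrev HLat (d L : ℕ) : Type := ℕ →₀ (Fin d → ZMod L)

/-- `hnorm x = 0` if `x = 0`, and `hnorm x = L^(i+1)` if `x i ≠ 0` and `x j = 0` for `j > i`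
(coordinates indexed from `0`, matching the paper's indexing from `1`). -/
def hnorm {d L : ℕ} (x : HLat d L) : ℕ :=
  x.support.sup fun i => L ^ (i + 1)

/-- The ball `Λ_n = {x : ‖x‖ ≤ L^n}`. -/
def Lambda (d L n : ℕ) : Set (HLat d L) := {x | hnorm x ≤ L ^ n}

/-- The defining equation for `ζ_n`:
`(L^d - 1) · ∑_{i=1}^n L^((i-1)d) exp(-z⁻¹ ρ(L^i)) = L^(nd) - 2`. -/
def zetaEq (d L : ℕ) (ρ : ℝ → ℝ) (n : ℕ) (z : ℝ) : Prop :=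
  ((L : ℝ) ^ d - 1) *
      ∑ i ∈ Finset.Icc 1 n, (L : ℝ) ^ ((i - 1) * d) * Real.exp (-z⁻¹ * ρ ((L : ℝ) ^ i))
    = (L : ℝ) ^ (n * d) - 2

/-- `ρ⁻(r) = max{ρ(r) - L^(-nθ), 0}`. -/
def rhoMinus (L : ℕ) (θ : ℝ) (ρ : ℝ → ℝ) (n : ℕ) (r : ℝ) : ℝ :=
  max (ρ r - (L : ℝ) ^ (-(n : ℝ) * θ)) 0

/-- `p⁻_r = 1 - exp(-ζ_n⁻¹ ρ⁻(r))`. -/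
def pMinus (L : ℕ) (θ : ℝ) (ρ : ℝ → ℝ) (ζ : ℕ → ℝ) (n : ℕ) (r : ℝ) : ℝ :=
  1 - Real.exp (-(ζ n)⁻¹ * rhoMinus L θ ρ n r)

/-- `m_j^{(n)} = (L^d - 1) · ∑_{i=1}^j L^((i-1)d) p⁻_{L^i}`. -/
def mjn (d L : ℕ) (θ : ℝ) (ρ : ℝ → ℝ) (ζ : ℕ → ℝ) (n j : ℕ) : ℝ :=
  ((L : ℝ) ^ d - 1) *
    ∑ i ∈ Finset.Icc 1 j, (L : ℝ) ^ ((i - 1) * d) * pMinus L θ ρ ζ n ((L : ℝ) ^ i)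

/-!
Since `ρ⁻ ≤ ρ`, `m_j^{(n)}` is at most the same weighted sum with `p_r = 1 - exp(-ζ_n⁻¹ ρ(r))`,
and the equation defining `ζ_n` says exactly that this sum, taken up to `j = n`, equals `1`.
Hence for `j < n`, `m_j^{(n)} ≤ 1 - (L^d - 1) L^{(n-1)d} p_{L^n}`. Bounding `p_r ≤ ζ_n⁻¹ ρ(r)`
with `ρ(L^i) ≤ A₂ L^{-iα}` in the same normalisation gives `ζ_n⁻¹ ≳ L^{n(α-d)}` (the weights
grow geometrically with ratio `L^{d-α} > 1`), so `ζ_n⁻¹ ρ(L^n) ≳ L^{-nd}` by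
`ρ(L^n) ≥ A₁ L^{-nα}`, and the last term, of weight `≈ L^{nd}`, stays bounded below uniformly
in `n` because `1 - e^{-y} ≥ y / (1 + y)`.
-/

open Real

-- With `x = L^d`, both `m_j^{(n)}` and the equation for `ζ_n` are of the form `weightedMass x p m`.
def weightedMass (x : ℝ) (p : ℕ → ℝ) (m : ℕ) : ℝ :=
  (x - 1) * ∑ i ∈ Icc 1 m, x ^ (i - 1) * p i

lemma sum_Icc_one_pow_pred (x : ℝ) (m : ℕ) :
    ∑ i ∈ Icc 1 m, x ^ (i - 1) = ∑ k ∈ range m, x ^ k := by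
  rw [← Finset.Ico_add_one_right_eq_Icc, Finset.sum_Ico_eq_sum_range]
  simp

section WeightedMass

variable {x : ℝ} {p q : ℕ → ℝ}

lemma weightedMass_one (x : ℝ) (m : ℕ) : weightedMass x (fun _ => 1) m = x ^ m - 1 := by
  simp only [weightedMass, mul_one, sum_Icc_one_pow_pred, mul_geom_sum]

lemma weightedMass_sub (m : ℕ) :
    weightedMass x (fun i => p i - q i) m = weightedMass x p m - weightedMass x q m := by
  simp only [weightedMass, mul_sub, sum_sub_distrib]

lemma weightedMass_one_sub_eq_one {n : ℕ} (h : weightedMass x p n = x ^ n - 2) :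
    weightedMass x (fun i => 1 - p i) n = 1 := by
  rw [weightedMass_sub (p := fun _ => 1), weightedMass_one, h]
  ring

lemma weightedMass_geom (x s c : ℝ) (m : ℕ) :
    (x * s - 1) * weightedMass x (fun i => c * s ^ i) m = c * s * (x - 1) * ((x * s) ^ m - 1) := by
  have hterm : ∀ i ∈ Icc 1 m, x ^ (i - 1) * (c * s ^ i) = c * s * (x * s) ^ (i - 1) := by
    intro i hi
    obtain ⟨k, rfl⟩ := Nat.exists_eq_add_of_le' (mem_Icc.1 hi).1
    simp only [Nat.add_sub_cancel, mul_pow, pow_succ]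
    ring
  rw [weightedMass, sum_congr rfl hterm, ← mul_sum, sum_Icc_one_pow_pred, ← mul_geom_sum]
  ring

lemma weightedMass_mono (hx : 1 ≤ x) {m : ℕ} (h : ∀ i, p i ≤ q i) :
    weightedMass x p m ≤ weightedMass x q m := by
  have : 0 ≤ x := by linarith
  unfold weightedMass
  gcongr with i
  exact h i

lemma weightedMass_add_le_of_lt (hx : 1 ≤ x) (hp : ∀ i, 0 ≤ p i) {j n : ℕ} (hjn : j < n) :
    weightedMass x p j + (x - 1) * (x ^ (n - 1) * p n) ≤ weightedMass x p n := by
  have : 0 ≤ x := by linarith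
  have hn : n ∉ Icc 1 j := by simp only [mem_Icc]; omega
  unfold weightedMass
  rw [← mul_add, add_comm, ← sum_insert (f := fun i => x ^ (i - 1) * p i) hn]
  gcongr
  · exact fun i _ _ => mul_nonneg (by positivity) (hp i)
  · intro i
    simp only [mem_insert, mem_Icc]
    omega

end WeightedMass

lemma one_sub_exp_neg_nonneg {y : ℝ} (hy : 0 ≤ y) : 0 ≤ 1 - exp (-y) :=
  sub_nonneg.2 (exp_le_one_iff.2 (neg_nonpos.2 hy))

lemma div_one_add_le_one_sub_exp_neg {y : ℝ} (hy : 0 ≤ y) : y / (1 + y) ≤ 1 - exp (-y) := by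
  have hexp : exp (-y) ≤ (1 + y)⁻¹ := by
    rw [exp_neg]
    exact inv_anti₀ (by positivity) (by linarith [add_one_le_exp y])
  have hsplit : y / (1 + y) = 1 - (1 + y)⁻¹ := by field_simp; ring
  linarith

section ExponentialWeights

variable {x s c A1 A2 : ℝ} {a : ℕ → ℝ} {n : ℕ}

lemma sub_one_le_of_weightedMass_eq_one (hx : 1 ≤ x) (hxs : 1 < x * s) (hs : 0 < s)
    (hA2 : 0 ≤ A2) (hc : 0 ≤ c) (hub : ∀ i, a i ≤ A2 * s ^ i)
    (h : weightedMass x (fun i => 1 - exp (-c * a i)) n = 1) :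
    x * s - 1 ≤ c * A2 * s * (x - 1) * (x * s) ^ n := by
  have hle : 1 ≤ weightedMass x (fun i => c * A2 * s ^ i) n := by
    refine h.symm.le.trans (weightedMass_mono hx fun i => ?_)
    calc 1 - exp (-c * a i) ≤ c * a i := by
          rw [neg_mul]; linarith [one_sub_le_exp_neg (c * a i)]
      _ ≤ c * A2 * s ^ i := by rw [mul_assoc]; exact mul_le_mul_of_nonneg_left (hub i) hc
  have hgeom := weightedMass_geom x s (c * A2) n
  have hcoef : 0 ≤ c * A2 * s * (x - 1) := by
    have : 0 ≤ x - 1 := by linarith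
    positivity
  nlinarith

lemma le_sub_one_mul_pow_mul_one_sub_exp_neg {β y : ℝ} (hx : 1 < x) (hβ : 0 ≤ β) (hn : n ≠ 0)
    (hy : β / x ^ n ≤ y) :
    (1 - x⁻¹) * (β / (1 + β)) ≤ (x - 1) * (x ^ (n - 1) * (1 - exp (-y))) := by
  have hxn : 1 ≤ x ^ n := one_le_pow₀ hx.le
  have hexp : β / (x ^ n + β) ≤ 1 - exp (-y) :=
    calc β / (x ^ n + β) = β / x ^ n / (1 + β / x ^ n) := by field_simp
      _ ≤ 1 - exp (-(β / x ^ n)) := div_one_add_le_one_sub_exp_neg (by positivity)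
      _ ≤ 1 - exp (-y) := by gcongr
  have hweight : (x - 1) * x ^ (n - 1) = (1 - x⁻¹) * x ^ n := by
    obtain ⟨k, rfl⟩ := Nat.exists_eq_add_one_of_ne_zero hn
    field_simp
    rw [Nat.add_sub_cancel, pow_succ]
    ring
  have hratio : β / (1 + β) ≤ x ^ n * (β / (x ^ n + β)) := by
    rw [mul_div_assoc', div_le_div_iff₀ (by positivity) (by positivity)]
    nlinarith [mul_nonneg (mul_nonneg hβ hβ) (sub_nonneg.2 hxn)]
  have hx' : 0 ≤ 1 - x⁻¹ := sub_nonneg.2 (inv_le_one_of_one_le₀ hx.le)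
  calc (1 - x⁻¹) * (β / (1 + β)) ≤ (1 - x⁻¹) * (x ^ n * (β / (x ^ n + β))) := by gcongr
    _ = (x - 1) * x ^ (n - 1) * (β / (x ^ n + β)) := by rw [hweight]; ring
    _ ≤ (x - 1) * (x ^ (n - 1) * (1 - exp (-y))) := by
      rw [mul_assoc]
      have : 0 ≤ x - 1 := by linarith
      gcongr

theorem exists_forall_weightedMass_le_one_sub (hx : 1 < x) (hs : 0 < s) (hxs : 1 < x * s)
    (hA1 : 0 < A1) (hA2 : 0 < A2) (hlb : ∀ i, A1 * s ^ i ≤ a i) (hub : ∀ i, a i ≤ A2 * s ^ i) :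
    ∃ δ, 0 < δ ∧ δ < 1 ∧ ∀ (c : ℝ) (n j : ℕ), 0 ≤ c →
      weightedMass x (fun i => 1 - exp (-c * a i)) n = 1 → j < n →
        weightedMass x (fun i => 1 - exp (-c * a i)) j ≤ 1 - δ := by
  have hx1 : 0 < x - 1 := sub_pos.2 hx
  have hxs1 : 0 < x * s - 1 := sub_pos.2 hxs
  set β := A1 * (x * s - 1) / (A2 * s * (x - 1)) with hβ
  have hβ0 : 0 < β := by positivity
  have hx' : 0 < 1 - x⁻¹ := sub_pos.2 (inv_lt_one_of_one_lt₀ hx)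
  refine ⟨(1 - x⁻¹) * (β / (1 + β)), by positivity, ?_, fun c n j hc h hjn => ?_⟩
  · have : β / (1 + β) < 1 := (div_lt_one (by positivity)).2 (by linarith)
    nlinarith [inv_pos.2 (zero_lt_one.trans hx)]
  have hca : β / x ^ n ≤ c * a n := by
    have hc1 := sub_one_le_of_weightedMass_eq_one hx.le hxs hs hA2.le hc hub h
    calc β / x ^ n ≤ A1 * (c * A2 * s * (x - 1) * (x * s) ^ n) / (A2 * s * (x - 1)) / x ^ n := by
          rw [hβ]; gcongr
      _ = c * (A1 * s ^ n) := by field_simp; ring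
      _ ≤ c * a n := by gcongr; exact hlb n
  have hnonneg : ∀ i, 0 ≤ 1 - exp (-c * a i) := fun i => by
    rw [neg_mul]
    exact one_sub_exp_neg_nonneg (mul_nonneg hc ((hlb i).trans' (by positivity)))
  have htail := le_sub_one_mul_pow_mul_one_sub_exp_neg hx hβ0.le (by omega) hca
  have hsplit := weightedMass_add_le_of_lt hx.le hnonneg hjn
  rw [h, neg_mul] at hsplit
  linarith

end ExponentialWeights

section HierarchicalLattice

variable {d L n j : ℕ} {θ : ℝ} {ρ : ℝ → ℝ} {ζ : ℕ → ℝ}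

lemma weightedMass_eq_one_of_zetaEq {z : ℝ} (h : zetaEq d L ρ n z) :
    weightedMass ((L : ℝ) ^ d) (fun i => 1 - exp (-z⁻¹ * ρ ((L : ℝ) ^ i))) n = 1 := by
  apply weightedMass_one_sub_eq_one
  simpa only [zetaEq, weightedMass, ← pow_mul'] using h

lemma mjn_eq_weightedMass :
    mjn d L θ ρ ζ n j = weightedMass ((L : ℝ) ^ d) (fun i => pMinus L θ ρ ζ n ((L : ℝ) ^ i)) j := by
  simp only [mjn, weightedMass, ← pow_mul']

lemma rhoMinus_le {r : ℝ} (h : 0 ≤ ρ r) : rhoMinus L θ ρ n r ≤ ρ r :=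
  max_le (sub_le_self _ (rpow_nonneg (Nat.cast_nonneg L) _)) h

lemma pMinus_le {r : ℝ} (hζ : 0 ≤ ζ n) (h : 0 ≤ ρ r) :
    pMinus L θ ρ ζ n r ≤ 1 - exp (-(ζ n)⁻¹ * ρ r) := by
  have := mul_le_mul_of_nonpos_left (rhoMinus_le (L := L) (θ := θ) (n := n) h)
    (neg_nonpos.2 (inv_nonneg.2 hζ))
  unfold pMinus
  linarith [exp_le_exp.2 this]

end HierarchicalLattice

theorem m_j_n_bounded_away_from_one_general
    (d L : ℕ) (hd : 1 ≤ d) (hL : 2 ≤ L)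
    (A1 A2 α : ℝ) (hA1 : 0 < A1) (hA12 : A1 ≤ A2)
    (hαd : α < (d : ℝ))
    (ρ : ℝ → ℝ)
    (hρlb : ∀ r : ℝ, 1 ≤ r → A1 * r ^ (-α) ≤ ρ r)
    (hρub : ∀ r : ℝ, 1 ≤ r → ρ r ≤ A2 * r ^ (-α))
    (θ : ℝ)
    (ζ : ℕ → ℝ) (hζpos : ∀ n : ℕ, 1 ≤ n → 0 < ζ n)
    (hζeq : ∀ n : ℕ, 1 ≤ n → zetaEq d L ρ n (ζ n))
 :
    ∃ n₀ : ℕ, 2 ≤ n₀ ∧ ∃ δ : ℝ, 0 < δ ∧ δ < 1 ∧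
      ∀ n : ℕ, n₀ ≤ n → ∀ j : ℕ, 1 ≤ j → j ≤ n - 1 →
        mjn d L θ ρ ζ n j ≤ 1 - δ := by
  have hL1 : (1 : ℝ) < L := by exact_mod_cast hL
  have hLi : ∀ i : ℕ, (1 : ℝ) ≤ (L : ℝ) ^ i := fun i => one_le_pow₀ hL1.le
  have hpow : ∀ i : ℕ, ((L : ℝ) ^ i) ^ (-α) = ((L : ℝ) ^ (-α)) ^ i := fun i =>
    (rpow_pow_comm (Nat.cast_nonneg L) _ _).symm
  have hratio : 1 < (L : ℝ) ^ d * (L : ℝ) ^ (-α) := by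
    rw [← rpow_natCast, ← rpow_add (by positivity)]
    exact one_lt_rpow hL1 (by linarith)
  obtain ⟨δ, hδ0, hδ1, hδ⟩ := exists_forall_weightedMass_le_one_sub
    (one_lt_pow₀ hL1 (by omega)) (by positivity) hratio hA1 (hA1.trans_le hA12)
    (a := fun i => ρ ((L : ℝ) ^ i)) (fun i => hpow i ▸ hρlb _ (hLi i))
    (fun i => hpow i ▸ hρub _ (hLi i))
  refine ⟨2, le_rfl, δ, hδ0, hδ1, fun n hn j _ hjn => ?_⟩
  have hζ := hζpos n (by omega)
  have hρL : ∀ i : ℕ, 0 ≤ ρ ((L : ℝ) ^ i) := fun i =>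
    (hρlb _ (hLi i)).trans' (by positivity)
  calc mjn d L θ ρ ζ n j
      = weightedMass ((L : ℝ) ^ d) (fun i => pMinus L θ ρ ζ n ((L : ℝ) ^ i)) j :=
        mjn_eq_weightedMass
    _ ≤ weightedMass ((L : ℝ) ^ d) (fun i => 1 - exp (-(ζ n)⁻¹ * ρ ((L : ℝ) ^ i))) j :=
        weightedMass_mono (hLi d) fun i => pMinus_le hζ.le (hρL i)
    _ ≤ 1 - δ :=
        hδ _ n j (inv_nonneg.2 hζ.le) (weightedMass_eq_one_of_zetaEq (hζeq n (by omega)))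
          (by omega)

/-- There exist `n₀ ≥ 2` and `δ ∈ (0,1)` with `m_j^{(n)} ≤ 1 - δ` for all
`n ≥ n₀` and `1 ≤ j ≤ n - 1`. -/
theorem m_j_n_bounded_away_from_one
    (d L : ℕ) (hd : 1 ≤ d) (hL : 2 ≤ L)
    (A1 A2 α : ℝ) (hA1 : 0 < A1) (hA12 : A1 ≤ A2)
    (hα0 : 0 < α) (hαd : α < (d : ℝ))
    (ρ : ℝ → ℝ) (hρ0 : ρ 0 = 0)
    (hρnn : ∀ r : ℝ, 0 ≤ r → 0 ≤ ρ r)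
    (hρlb : ∀ r : ℝ, 1 ≤ r → A1 * r ^ (-α) ≤ ρ r)
    (hρub : ∀ r : ℝ, 1 ≤ r → ρ r ≤ A2 * r ^ (-α))
    (θ : ℝ) (hα56 : α < 5 * (d : ℝ) / 6) (hθα : α < θ)
    (hθ1 : α ≤ (d : ℝ) / 2 → θ < 4 * α / 3)
    (hθ2 : (d : ℝ) / 2 < α → α ≤ 2 * (d : ℝ) / 3 → θ < 2 * α - (d : ℝ) / 2)
    (hθ3 : 2 * (d : ℝ) / 3 < α → θ < 5 * α / 2 - (d : ℝ))
    (ζ : ℕ → ℝ) (hζpos : ∀ n : ℕ, 1 ≤ n → 0 < ζ n)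
    (hζeq : ∀ n : ℕ, 1 ≤ n → zetaEq d L ρ n (ζ n))
 :
    ∃ n₀ : ℕ, 2 ≤ n₀ ∧ ∃ δ : ℝ, 0 < δ ∧ δ < 1 ∧
      ∀ n : ℕ, n₀ ≤ n → ∀ j : ℕ, 1 ≤ j → j ≤ n - 1 →
        mjn d L θ ρ ζ n j ≤ 1 - δ :=
  m_j_n_bounded_away_from_one_general d L hd hL A1 A2 α hA1 hA12 hαd ρ hρlb hρub θ ζ hζpos hζeq

end
end

section
/- There exist constants c₁, c₂, C > 0 depending only on A_1, A_2, L, d, α and θ such that for all n ≥ 1 and all t ∈ [0, 1/2] one has E[exp(t·W_1^{(n)})] ≤ 1 + t·(1 − c₁·L^{−n(θ−α)}) + C·t², and consequently, setting ε_n := min{c₁/(2C·L^{n(θ−α)}), 1/2}, one has E[exp(ε_n·W_1^{(n)})] ≤ exp(ε_n·(1 − c₂·L^{−n(θ−α)})) for all n ≥ 1. -/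
/-!
Write `N_i = L^{id} - L^{(i-1)d}` and `E_i = exp(-ζ_n⁻¹ ρ(L^i))`. Since `∑ N_i = L^{nd} - 1`, the
`ζ`-equation says `∑ N_i (1 - E_i) = 1`; bounding `1 - E_i ≤ ζ_n⁻¹ A₂ L^{-iα}` and summing the
geometric series gives `ζ_n ≲ L^{n(d-α)}`. Lowering `ρ` by `L^{-nθ}` multiplies each `E_i` by at
least `1 + ζ_n⁻¹ min(A₁, 1) L^{-nθ}` (as `L^{-nθ} ≤ L^{-iα}`), so the mean
`m_n = ∑ N_i p⁻_{L^i}` of `W₁` satisfies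
`1 - m_n ≥ (L^{nd} - 2) ζ_n⁻¹ min(A₁, 1) L^{-nθ} ≳ L^{-n(θ-α)}`.
For independent binomials `E[e^{tW₁}] ≤ exp(m_n (e^t - 1))`, and a second-order expansion for
`t ≤ 1/2` gives the first bound with `C = 4`; the choice of `ε_n` makes `C ε_n²` cost at most half
of the gain `c₁ ε_n L^{-n(θ-α)}`, whence the second bound with `c₂ = c₁ / 2`.
-/

open MeasureTheory ProbabilityTheory Filter Finset
open scoped ENNReal Classical

noncomputable section

namespace Real

lemma exp_le_one_add_add_sq {x : ℝ} (hx : |x| ≤ 1) : exp x ≤ 1 + x + x ^ 2 := by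
  linarith [le_of_abs_le (abs_exp_sub_one_sub_id_le hx)]

lemma mul_exp_add_one_sub_pow_le {p : ℝ} (hp0 : 0 ≤ p) (hp1 : p ≤ 1) (t : ℝ) (N : ℕ) :
    (p * exp t + (1 - p)) ^ N ≤ exp (N * p * (exp t - 1)) := by
  calc (p * exp t + (1 - p)) ^ N = (p * (exp t - 1) + 1) ^ N := by ring
    _ ≤ exp (p * (exp t - 1)) ^ N :=
        pow_le_pow_left₀ (by nlinarith [exp_pos t]) (add_one_le_exp _) N
    _ = exp (N * p * (exp t - 1)) := by rw [← exp_nat_mul, mul_assoc]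

lemma exp_mul_exp_sub_one_le {m δ t : ℝ} (hm0 : 0 ≤ m) (hm : m ≤ 1 - δ) (hδ : 0 ≤ δ)
    (ht0 : 0 ≤ t) (ht : t ≤ 1 / 2) :
    exp (m * (exp t - 1)) ≤ 1 + t * (1 - δ) + 4 * t ^ 2 := by
  have hexp_t : exp t - 1 ≤ t + t ^ 2 := by
    linarith [exp_le_one_add_add_sq (abs_le.2 ⟨by linarith, by linarith⟩ : |t| ≤ 1)]
  set x := m * (exp t - 1)
  have hexp_t0 : 0 ≤ exp t - 1 := sub_nonneg.2 (one_le_exp ht0)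
  have hx0 : 0 ≤ x := mul_nonneg hm0 hexp_t0
  have hx : x ≤ (1 - δ) * (t + t ^ 2) := mul_le_mul hm hexp_t hexp_t0 (by linarith)
  have hx32 : x ≤ 3 / 2 * t := by nlinarith
  calc exp x ≤ 1 + x + x ^ 2 := exp_le_one_add_add_sq (abs_le.2 ⟨by linarith, by linarith⟩)
    _ ≤ 1 + (1 - δ) * (t + t ^ 2) + (3 / 2 * t) ^ 2 := by gcongr
    _ ≤ 1 + t * (1 - δ) + 4 * t ^ 2 := by nlinarith [mul_nonneg hδ (sq_nonneg t)]

lemma one_add_mul_add_mul_sq_le_exp {ε δ C : ℝ} (hε : 0 ≤ ε) (h : C * ε ≤ δ / 2) :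
    1 + ε * (1 - δ) + C * ε ^ 2 ≤ exp (ε * (1 - δ / 2)) := by
  nlinarith [add_one_le_exp (ε * (1 - δ / 2)), mul_le_mul_of_nonneg_left h hε]

lemma exp_neg_mul_mul_min_le (a x τ : ℝ) :
    exp (-a * x) * (a * min x τ) ≤ exp (-a * max (x - τ) 0) - exp (-a * x) := by
  have hsplit : -a * max (x - τ) 0 = -a * x + a * min x τ := by
    rcases le_total x τ with h | h
    · rw [max_eq_right (by linarith), min_eq_left h]; ring
    · rw [max_eq_left (by linarith), min_eq_right h]; ring
  rw [hsplit, exp_add]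
  nlinarith [mul_le_mul_of_nonneg_left (add_one_le_exp (a * min x τ))
    (exp_pos (-a * x)).le]

end Real

lemma sum_Icc_pow_le {r : ℝ} (hr : 1 < r) (n : ℕ) :
    ∑ i ∈ Icc 1 n, r ^ i ≤ r ^ n * (r / (r - 1)) := by
  induction n with
  | zero => simp; bound
  | succ n ih =>
    rw [sum_Icc_succ_top (Nat.le_add_left 1 n)]
    have : r ^ n * (r / (r - 1)) + r ^ (n + 1) = r ^ (n + 1) * (r / (r - 1)) := by
      field_simp [show r - 1 ≠ 0 by linarith]; ring
    linarith

lemma pow_sub_one_mul_geom_sum_Icc (x : ℝ) (d n : ℕ) :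
    (x ^ d - 1) * ∑ i ∈ Icc 1 n, x ^ ((i - 1) * d) = x ^ (n * d) - 1 := by
  induction n with
  | zero => simp
  | succ n ih =>
    rw [sum_Icc_succ_top (Nat.le_add_left 1 n), mul_add, ih, Nat.add_sub_cancel, add_mul,
      one_mul, pow_add]
    ring

lemma sub_one_mul_pow_le_pow {x : ℝ} (hx : 0 ≤ x) {i : ℕ} (hi : 1 ≤ i) (d : ℕ) :
    (x ^ d - 1) * x ^ ((i - 1) * d) ≤ x ^ (i * d) := by
  rw [show i * d = d + (i - 1) * d by nth_rw 1 [← Nat.sub_add_cancel hi]; ring, pow_add]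
  nlinarith [pow_nonneg hx ((i - 1) * d)]

lemma pow_mul_mul_pow_rpow_neg {x : ℝ} (hx : 0 < x) (i d : ℕ) (α : ℝ) :
    x ^ (i * d) * (x ^ i) ^ (-α) = (x ^ ((d : ℝ) - α)) ^ i := by
  rw [← Real.rpow_natCast x (i * d), ← Real.rpow_natCast x i, ← Real.rpow_mul hx.le,
    ← Real.rpow_add hx, ← Real.rpow_mul_natCast hx.le]
  congr 1
  push_cast
  ring

section Binomial

variable {Ω : Type*} [MeasurableSpace Ω] {P : Measure Ω}

lemma lintegral_exp_mul_of_binomial {X : Ω → ℕ} (hX : Measurable X) {N : ℕ} {p : ℝ}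
    (hp0 : 0 ≤ p) (hp1 : p ≤ 1)
    (hlaw : ∀ k : ℕ, P {ω | X ω = k} =
      ENNReal.ofReal ((N.choose k : ℝ) * p ^ k * (1 - p) ^ (N - k))) (t : ℝ) :
    ∫⁻ ω, ENNReal.ofReal (Real.exp (t * X ω)) ∂P =
      ENNReal.ofReal ((p * Real.exp t + (1 - p)) ^ N) := by
  have hmass_nonneg (k : ℕ) : 0 ≤ (N.choose k : ℝ) * p ^ k * (1 - p) ^ (N - k) := by
    have : 0 ≤ 1 - p := by linarith
    positivity
  rw [← lintegral_map (f := fun k : ℕ => ENNReal.ofReal (Real.exp (t * k)))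
      (measurable_of_countable _) hX, lintegral_countable']
  simp_rw [Measure.map_apply hX (measurableSet_singleton _)]
  change ∑' k : ℕ, _ * P {ω | X ω = k} = _
  simp_rw [hlaw, ← ENNReal.ofReal_mul (Real.exp_nonneg _)]
  rw [tsum_eq_sum (s := range (N + 1)) fun k hk => by
      simp [Nat.choose_eq_zero_of_lt (by simpa using hk : N < k)],
    ← ENNReal.ofReal_sum_of_nonneg fun k _ => mul_nonneg (Real.exp_nonneg _) (hmass_nonneg k),
    add_pow]
  congr 1
  refine sum_congr rfl fun k _ => ?_
  rw [mul_comm t, Real.exp_nat_mul, mul_pow]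
  ring

lemma lintegral_exp_mul_sum_le_of_binomial {ι : Type*} {X : ι → Ω → ℕ}
    (hX : ∀ i, Measurable (X i)) (hindep : iIndepFun X P) (s : Finset ι) (N : ι → ℕ)
    (p : ι → ℝ) (hp0 : ∀ i ∈ s, 0 ≤ p i) (hp1 : ∀ i ∈ s, p i ≤ 1)
    (hlaw : ∀ i ∈ s, ∀ k : ℕ, P {ω | X i ω = k} =
      ENNReal.ofReal (((N i).choose k : ℝ) * p i ^ k * (1 - p i) ^ (N i - k))) (t : ℝ) :
    ∫⁻ ω, ENNReal.ofReal (Real.exp (t * ((∑ i ∈ s, X i ω : ℕ) : ℝ))) ∂P ≤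
      ENNReal.ofReal (Real.exp ((∑ i ∈ s, (N i : ℝ) * p i) * (Real.exp t - 1))) := by
  set g : ℕ → ℝ≥0∞ := fun k => ENNReal.ofReal (Real.exp (t * k))
  have hfactor_nonneg : ∀ i ∈ s, 0 ≤ (p i * Real.exp t + (1 - p i)) ^ N i := fun i hi => by
    have := hp1 i hi; have := hp0 i hi; positivity
  have hsplit (ω : Ω) : ENNReal.ofReal (Real.exp (t * ((∑ i ∈ s, X i ω : ℕ) : ℝ))) =
      ∏ i ∈ s, g (X i ω) := by
    rw [Nat.cast_sum, mul_sum, Real.exp_sum,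
      ENNReal.ofReal_prod_of_nonneg fun i _ => Real.exp_nonneg _]
  calc ∫⁻ ω, ENNReal.ofReal (Real.exp (t * ((∑ i ∈ s, X i ω : ℕ) : ℝ))) ∂P
      = ∏ i ∈ s, ∫⁻ ω, g (X i ω) ∂P := by
        simp_rw [hsplit]
        exact lintegral_prod_eq_prod_lintegral_of_indepFun s (fun i ω => g (X i ω))
          (hindep.comp (fun _ => g) fun _ => measurable_of_countable g)
          fun i => (measurable_of_countable g).comp (hX i)
    _ = ENNReal.ofReal (∏ i ∈ s, (p i * Real.exp t + (1 - p i)) ^ N i) := by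
        rw [ENNReal.ofReal_prod_of_nonneg hfactor_nonneg]
        exact prod_congr rfl fun i hi =>
          lintegral_exp_mul_of_binomial (hX i) (hp0 i hi) (hp1 i hi) (hlaw i hi) t
    _ ≤ ENNReal.ofReal (∏ i ∈ s, Real.exp (N i * p i * (Real.exp t - 1))) :=
        ENNReal.ofReal_le_ofReal <| prod_le_prod hfactor_nonneg fun i hi =>
          Real.mul_exp_add_one_sub_pow_le (hp0 i hi) (hp1 i hi) t (N i)
    _ = ENNReal.ofReal (Real.exp ((∑ i ∈ s, (N i : ℝ) * p i) * (Real.exp t - 1))) := by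
        rw [← Real.exp_sum, sum_mul]

end Binomial

lemma min_mul_rpow_le_min {L : ℕ} (hL : 1 ≤ L) {A1 α θ : ℝ} (hA1 : 0 ≤ A1) (hα : 0 ≤ α)
    (hθα : α ≤ θ) {ρ : ℝ → ℝ} (hρlb : ∀ r : ℝ, 1 ≤ r → A1 * r ^ (-α) ≤ ρ r) {i n : ℕ}
    (hin : i ≤ n) :
    min A1 1 * (L : ℝ) ^ (-(n : ℝ) * θ) ≤ min (ρ ((L : ℝ) ^ i)) ((L : ℝ) ^ (-(n : ℝ) * θ)) := by
  have hL' : (1 : ℝ) ≤ L := by exact_mod_cast hL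
  have hτ : (L : ℝ) ^ (-(n : ℝ) * θ) ≤ ((L : ℝ) ^ i) ^ (-α) := by
    rw [← Real.rpow_natCast, ← Real.rpow_mul (by positivity)]
    apply Real.rpow_le_rpow_of_exponent_le hL'
    have : (i : ℝ) ≤ n := by exact_mod_cast hin
    nlinarith
  have hτ0 : 0 ≤ (L : ℝ) ^ (-(n : ℝ) * θ) := by positivity
  refine le_min ?_ (by simpa using mul_le_mul_of_nonneg_right (min_le_right A1 1) hτ0)
  calc min A1 1 * (L : ℝ) ^ (-(n : ℝ) * θ) ≤ A1 * ((L : ℝ) ^ i) ^ (-α) :=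
        mul_le_mul (min_le_left _ _) hτ hτ0 hA1
    _ ≤ ρ ((L : ℝ) ^ i) := hρlb _ (one_le_pow₀ hL')

lemma sub_one_mul_pow_mul_one_sub_exp_le {d L i : ℕ} (hL : 1 ≤ L) (hi : 1 ≤ i)
    {ρ : ℝ → ℝ} {z A2 α : ℝ} (hz : 0 < z) (hρnn : ∀ r : ℝ, 0 ≤ r → 0 ≤ ρ r)
    (hρub : ∀ r : ℝ, 1 ≤ r → ρ r ≤ A2 * r ^ (-α)) :
    ((L : ℝ) ^ d - 1) * ((L : ℝ) ^ ((i - 1) * d) * (1 - Real.exp (-z⁻¹ * ρ ((L : ℝ) ^ i)))) ≤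
      z⁻¹ * A2 * ((L : ℝ) ^ ((d : ℝ) - α)) ^ i := by
  have hL1 : (1 : ℝ) ≤ L := by exact_mod_cast hL
  have hρi : 0 ≤ z⁻¹ * ρ ((L : ℝ) ^ i) := mul_nonneg (inv_nonneg.2 hz.le) (hρnn _ (by positivity))
  have hexp_le : Real.exp (-z⁻¹ * ρ ((L : ℝ) ^ i)) ≤ 1 := by
    rw [neg_mul, Real.exp_le_one_iff]
    linarith
  calc ((L : ℝ) ^ d - 1) * ((L : ℝ) ^ ((i - 1) * d) * (1 - Real.exp (-z⁻¹ * ρ ((L : ℝ) ^ i))))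
      = ((L : ℝ) ^ d - 1) * (L : ℝ) ^ ((i - 1) * d) *
          (1 - Real.exp (-z⁻¹ * ρ ((L : ℝ) ^ i))) := by ring
    _ ≤ (L : ℝ) ^ (i * d) * (z⁻¹ * (A2 * ((L : ℝ) ^ i) ^ (-α))) := by
        refine mul_le_mul (sub_one_mul_pow_le_pow (by positivity) hi d) ?_ (by linarith)
          (by positivity)
        calc 1 - Real.exp (-z⁻¹ * ρ ((L : ℝ) ^ i)) ≤ z⁻¹ * ρ ((L : ℝ) ^ i) := by
              rw [neg_mul]
              linarith [Real.one_sub_le_exp_neg (z⁻¹ * ρ ((L : ℝ) ^ i))]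
          _ ≤ z⁻¹ * (A2 * ((L : ℝ) ^ i) ^ (-α)) := by
              gcongr
              exact hρub _ (one_le_pow₀ hL1)
    _ = z⁻¹ * A2 * ((L : ℝ) ^ ((d : ℝ) - α)) ^ i := by
        rw [← pow_mul_mul_pow_rpow_neg (by positivity)]
        ring

namespace zetaEq

variable {d L : ℕ} {ρ : ℝ → ℝ} {n : ℕ} {z : ℝ}

lemma mul_sum_one_sub_exp (h : zetaEq d L ρ n z) :
    ((L : ℝ) ^ d - 1) *
      ∑ i ∈ Icc 1 n, (L : ℝ) ^ ((i - 1) * d) * (1 - Real.exp (-z⁻¹ * ρ ((L : ℝ) ^ i))) = 1 := by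
  unfold zetaEq at h
  simp_rw [mul_one_sub, sum_sub_distrib, mul_sub, pow_sub_one_mul_geom_sum_Icc, h]
  ring

lemma three_le_pow (hd : 1 ≤ d) (hL : 2 ≤ L) (hn : 1 ≤ n) (h : zetaEq d L ρ n z) :
    (3 : ℝ) ≤ (L : ℝ) ^ (n * d) := by
  have htwo : 2 ≤ L ^ (n * d) := hL.trans (Nat.le_self_pow (Nat.mul_pos hn hd).ne' L)
  have hne : L ^ (n * d) ≠ 2 := by
    intro htwo'
    unfold zetaEq at h
    have hLd : (1 : ℝ) < (L : ℝ) ^ d := one_lt_pow₀ (by exact_mod_cast hL) (by omega)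
    have hsum : 0 < ∑ i ∈ Icc 1 n, (L : ℝ) ^ ((i - 1) * d) * Real.exp (-z⁻¹ * ρ ((L : ℝ) ^ i)) :=
      sum_pos (fun i _ => by positivity) ⟨1, by simp [hn]⟩
    have hLnd : (L : ℝ) ^ (n * d) = 2 := by exact_mod_cast htwo'
    rw [hLnd, sub_self] at h
    nlinarith
  exact_mod_cast (by omega : 3 ≤ L ^ (n * d))

lemma le_mul_pow {A2 α : ℝ} (hL : 2 ≤ L) (hαd : α < d)
    (hρnn : ∀ r : ℝ, 0 ≤ r → 0 ≤ ρ r) (hρub : ∀ r : ℝ, 1 ≤ r → ρ r ≤ A2 * r ^ (-α))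
    (hz : 0 < z) (h : zetaEq d L ρ n z) :
    z ≤ A2 * (L : ℝ) ^ ((d : ℝ) - α) / ((L : ℝ) ^ ((d : ℝ) - α) - 1) *
      ((L : ℝ) ^ ((d : ℝ) - α)) ^ n := by
  set r := (L : ℝ) ^ ((d : ℝ) - α)
  have hr : 1 < r := Real.one_lt_rpow (by exact_mod_cast hL) (by linarith)
  have hA2 : 0 ≤ A2 := by simpa using (hρnn 1 zero_le_one).trans (hρub 1 le_rfl)
  have hone : 1 ≤ z⁻¹ * (A2 * r / (r - 1) * r ^ n) :=
    calc (1 : ℝ) = ((L : ℝ) ^ d - 1) * ∑ i ∈ Icc 1 n, (L : ℝ) ^ ((i - 1) * d) *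
          (1 - Real.exp (-z⁻¹ * ρ ((L : ℝ) ^ i))) := h.mul_sum_one_sub_exp.symm
      _ ≤ ∑ i ∈ Icc 1 n, z⁻¹ * A2 * r ^ i := by
          rw [mul_sum]
          exact sum_le_sum fun i hi => sub_one_mul_pow_mul_one_sub_exp_le (by omega)
            (mem_Icc.1 hi).1 hz hρnn hρub
      _ ≤ z⁻¹ * A2 * (r ^ n * (r / (r - 1))) := by
          rw [← mul_sum]
          gcongr
          exact sum_Icc_pow_le hr n
      _ = z⁻¹ * (A2 * r / (r - 1) * r ^ n) := by ring
  simpa using (le_inv_mul_iff₀ hz).1 hone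

end zetaEq

lemma pMinus_nonneg {L : ℕ} {θ : ℝ} {ρ : ℝ → ℝ} {ζ : ℕ → ℝ} {n : ℕ} (hζ : 0 ≤ ζ n) (x : ℝ) :
    0 ≤ pMinus L θ ρ ζ n x :=
  sub_nonneg.2 <| Real.exp_le_one_iff.2 <|
    mul_nonpos_of_nonpos_of_nonneg (neg_nonpos.2 (inv_nonneg.2 hζ)) (le_max_right _ _)

lemma pMinus_le_one (L : ℕ) (θ : ℝ) (ρ : ℝ → ℝ) (ζ : ℕ → ℝ) (n : ℕ) (x : ℝ) :
    pMinus L θ ρ ζ n x ≤ 1 :=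
  sub_le_self _ (Real.exp_pos _).le

section Mean

variable {d L : ℕ} {θ : ℝ} {ρ : ℝ → ℝ} {ζ : ℕ → ℝ} {n : ℕ}

lemma mjn_eq_sum (hL : 1 ≤ L) (j : ℕ) :
    mjn d L θ ρ ζ n j = ∑ i ∈ Icc 1 j,
      ((L ^ (i * d) - L ^ ((i - 1) * d) : ℕ) : ℝ) * pMinus L θ ρ ζ n ((L : ℝ) ^ i) := by
  rw [mjn, mul_sum]
  refine sum_congr rfl fun i hi => ?_
  obtain ⟨k, rfl⟩ : ∃ k, i = k + 1 := ⟨i - 1, by have := (mem_Icc.1 hi).1; omega⟩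
  rw [Nat.add_sub_cancel,
    Nat.cast_sub (Nat.pow_le_pow_right hL (Nat.mul_le_mul_right d (Nat.le_succ k))),
    Nat.cast_pow, Nat.cast_pow, show (k + 1) * d = d + k * d by ring, pow_add]
  ring

lemma mjn_nonneg (hL : 1 ≤ L) (hζ : 0 ≤ ζ n) (j : ℕ) : 0 ≤ mjn d L θ ρ ζ n j := by
  have : (1 : ℝ) ≤ (L : ℝ) ^ d := one_le_pow₀ (by exact_mod_cast hL)
  exact mul_nonneg (by linarith) (sum_nonneg fun i _ => mul_nonneg (by positivity)
    (pMinus_nonneg hζ _))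

lemma one_sub_mjn_eq (h : zetaEq d L ρ n (ζ n)) :
    1 - mjn d L θ ρ ζ n n = ((L : ℝ) ^ d - 1) * ∑ i ∈ Icc 1 n, (L : ℝ) ^ ((i - 1) * d) *
      (Real.exp (-(ζ n)⁻¹ * rhoMinus L θ ρ n ((L : ℝ) ^ i)) -
        Real.exp (-(ζ n)⁻¹ * ρ ((L : ℝ) ^ i))) := by
  conv_lhs => rw [← h.mul_sum_one_sub_exp, mjn, ← mul_sub, ← sum_sub_distrib]
  congr 1
  refine sum_congr rfl fun i _ => ?_
  rw [pMinus]
  ring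

lemma one_sub_mjn_ge (hL : 1 ≤ L) {A1 α : ℝ} (hA1 : 0 ≤ A1) (hα : 0 ≤ α) (hθα : α ≤ θ)
    (hρlb : ∀ r : ℝ, 1 ≤ r → A1 * r ^ (-α) ≤ ρ r) (hζ : 0 ≤ ζ n)
    (h : zetaEq d L ρ n (ζ n)) :
    ((L : ℝ) ^ (n * d) - 2) * ((ζ n)⁻¹ * (min A1 1 * (L : ℝ) ^ (-(n : ℝ) * θ))) ≤
      1 - mjn d L θ ρ ζ n n := by
  have hLd : (0 : ℝ) ≤ (L : ℝ) ^ d - 1 :=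
    sub_nonneg.2 (one_le_pow₀ (by exact_mod_cast hL))
  rw [one_sub_mjn_eq h, ← show _ = (L : ℝ) ^ (n * d) - 2 from h, mul_assoc, sum_mul]
  refine mul_le_mul_of_nonneg_left (sum_le_sum fun i hi => ?_) hLd
  rw [mul_assoc]
  refine mul_le_mul_of_nonneg_left ?_ (by positivity)
  calc Real.exp (-(ζ n)⁻¹ * ρ ((L : ℝ) ^ i)) *
        ((ζ n)⁻¹ * (min A1 1 * (L : ℝ) ^ (-(n : ℝ) * θ)))
      ≤ Real.exp (-(ζ n)⁻¹ * ρ ((L : ℝ) ^ i)) *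
        ((ζ n)⁻¹ * min (ρ ((L : ℝ) ^ i)) ((L : ℝ) ^ (-(n : ℝ) * θ))) := by
        gcongr
        exact min_mul_rpow_le_min hL hA1 hα hθα hρlb (mem_Icc.1 hi).2
    _ ≤ _ := Real.exp_neg_mul_mul_min_le _ _ _

end Mean

lemma exists_pos_forall_mjn_le {d L : ℕ} (hd : 1 ≤ d) (hL : 2 ≤ L) {A1 A2 α θ : ℝ}
    (hA1 : 0 < A1) (hA2 : 0 < A2) (hα0 : 0 < α) (hαd : α < d) (hθα : α < θ) {ρ : ℝ → ℝ}
    (hρnn : ∀ r : ℝ, 0 ≤ r → 0 ≤ ρ r) (hρlb : ∀ r : ℝ, 1 ≤ r → A1 * r ^ (-α) ≤ ρ r)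
    (hρub : ∀ r : ℝ, 1 ≤ r → ρ r ≤ A2 * r ^ (-α)) {ζ : ℕ → ℝ}
    (hζpos : ∀ n : ℕ, 1 ≤ n → 0 < ζ n) (hζeq : ∀ n : ℕ, 1 ≤ n → zetaEq d L ρ n (ζ n)) :
    ∃ c > 0, ∀ n : ℕ, 1 ≤ n →
      mjn d L θ ρ ζ n n ≤ 1 - c * (L : ℝ) ^ (-(n : ℝ) * (θ - α)) := by
  set r := (L : ℝ) ^ ((d : ℝ) - α)
  have hL0 : (0 : ℝ) < L := by positivity
  have hr : 1 < r := Real.one_lt_rpow (by exact_mod_cast hL) (by linarith)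
  set B := A2 * r / (r - 1)
  have hB : 0 < B := div_pos (by positivity) (by linarith)
  refine ⟨min A1 1 / (3 * B), div_pos (lt_min hA1 one_pos) (by positivity), fun n hn => ?_⟩
  have hζ := hζpos n hn
  have hpow : (L : ℝ) ^ (n * d) * (L : ℝ) ^ (-(n : ℝ) * θ) =
      r ^ n * (L : ℝ) ^ (-(n : ℝ) * (θ - α)) := by
    rw [← Real.rpow_natCast, ← Real.rpow_add hL0, ← Real.rpow_mul_natCast hL0.le,
      ← Real.rpow_add hL0]
    congr 1
    push_cast
    ring
  have hgain := one_sub_mjn_ge (by omega) hA1.le hα0.le hθα.le hρlb hζ.le (hζeq n hn)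
  have h3 := (hζeq n hn).three_le_pow hd hL hn
  have hζle := (hζeq n hn).le_mul_pow hL hαd hρnn hρub hζ
  suffices min A1 1 / (3 * B) * (L : ℝ) ^ (-(n : ℝ) * (θ - α)) ≤
      ((L : ℝ) ^ (n * d) - 2) * ((ζ n)⁻¹ * (min A1 1 * (L : ℝ) ^ (-(n : ℝ) * θ))) by linarith
  calc min A1 1 / (3 * B) * (L : ℝ) ^ (-(n : ℝ) * (θ - α))
      = min A1 1 / (3 * B) * (r ^ n * (L : ℝ) ^ (-(n : ℝ) * (θ - α)) / r ^ n) := by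
        rw [mul_div_cancel_left₀ _ (by positivity)]
    _ = (L : ℝ) ^ (n * d) / 3 * ((B * r ^ n)⁻¹ * (min A1 1 * (L : ℝ) ^ (-(n : ℝ) * θ))) := by
        rw [← hpow]
        ring
    _ ≤ ((L : ℝ) ^ (n * d) - 2) * ((ζ n)⁻¹ * (min A1 1 * (L : ℝ) ^ (-(n : ℝ) * θ))) := by
        gcongr <;> linarith

theorem mgf_W_one_bounds_general
    (d L : ℕ) (hd : 1 ≤ d) (hL : 2 ≤ L)
    (A1 A2 α : ℝ) (hA1 : 0 < A1) (hA12 : A1 ≤ A2)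
    (hα0 : 0 < α) (hαd : α < (d : ℝ))
    (ρ : ℝ → ℝ)
    (hρnn : ∀ r : ℝ, 0 ≤ r → 0 ≤ ρ r)
    (hρlb : ∀ r : ℝ, 1 ≤ r → A1 * r ^ (-α) ≤ ρ r)
    (hρub : ∀ r : ℝ, 1 ≤ r → ρ r ≤ A2 * r ^ (-α))
    (θ : ℝ) (hθα : α < θ)
    (ζ : ℕ → ℝ) (hζpos : ∀ n : ℕ, 1 ≤ n → 0 < ζ n)
    (hζeq : ∀ n : ℕ, 1 ≤ n → zetaEq d L ρ n (ζ n))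
    {Ω : Type} [MeasurableSpace Ω] (P : Measure Ω)
    (X : ℕ → ℕ → Ω → ℕ)
    (hXmeas : ∀ n i, Measurable (X n i))
    (hXindep : ∀ n : ℕ, iIndepFun (X n) P)
    (hXdist : ∀ n i : ℕ, 1 ≤ i → i ≤ n → ∀ k : ℕ,
      P {ω | X n i ω = k} =
        ENNReal.ofReal (((L ^ (i * d) - L ^ ((i - 1) * d)).choose k : ℝ) *
          pMinus L θ ρ ζ n ((L : ℝ) ^ i) ^ k *
          (1 - pMinus L θ ρ ζ n ((L : ℝ) ^ i)) ^ (L ^ (i * d) - L ^ ((i - 1) * d) - k)))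
 :
    ∃ c₁ c₂ C : ℝ, 0 < c₁ ∧ 0 < c₂ ∧ 0 < C ∧
      (∀ n : ℕ, 1 ≤ n → ∀ t : ℝ, 0 ≤ t → t ≤ 1 / 2 →
        ∫⁻ ω, ENNReal.ofReal
            (Real.exp (t * ((∑ i ∈ Finset.Icc 1 n, X n i ω : ℕ) : ℝ))) ∂P ≤
          ENNReal.ofReal
            (1 + t * (1 - c₁ * (L : ℝ) ^ (-(n : ℝ) * (θ - α))) + C * t ^ 2)) ∧
      (∀ n : ℕ, 1 ≤ n →
        ∫⁻ ω, ENNReal.ofReal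
            (Real.exp (min (c₁ / (2 * C * (L : ℝ) ^ ((n : ℝ) * (θ - α)))) (1 / 2) *
              ((∑ i ∈ Finset.Icc 1 n, X n i ω : ℕ) : ℝ))) ∂P ≤
          ENNReal.ofReal
            (Real.exp (min (c₁ / (2 * C * (L : ℝ) ^ ((n : ℝ) * (θ - α)))) (1 / 2) *
              (1 - c₂ * (L : ℝ) ^ (-(n : ℝ) * (θ - α)))))) := by
  obtain ⟨c, hc, hmean⟩ := exists_pos_forall_mjn_le hd hL hA1 (hA1.trans_le hA12) hα0 hαd hθα
    hρnn hρlb hρub hζpos hζeq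
  have hmgf (n : ℕ) (hn : 1 ≤ n) (t : ℝ) (ht0 : 0 ≤ t) (ht : t ≤ 1 / 2) :
      ∫⁻ ω, ENNReal.ofReal (Real.exp (t * ((∑ i ∈ Icc 1 n, X n i ω : ℕ) : ℝ))) ∂P ≤
        ENNReal.ofReal (1 + t * (1 - c * (L : ℝ) ^ (-(n : ℝ) * (θ - α))) + 4 * t ^ 2) := by
    have hζ := (hζpos n hn).le
    refine (lintegral_exp_mul_sum_le_of_binomial (hXmeas n) (hXindep n) (Icc 1 n) _ _
      (fun i _ => pMinus_nonneg hζ _) (fun i _ => pMinus_le_one L θ ρ ζ n _)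
      (fun i hi => hXdist n i (mem_Icc.1 hi).1 (mem_Icc.1 hi).2) t).trans
      (ENNReal.ofReal_le_ofReal ?_)
    rw [← mjn_eq_sum (by omega)]
    exact Real.exp_mul_exp_sub_one_le (mjn_nonneg (by omega) hζ n) (hmean n hn) (by positivity)
      ht0 ht
  refine ⟨c, c / 2, 4, hc, by positivity, by norm_num, hmgf, fun n hn => ?_⟩
  set K := (L : ℝ) ^ ((n : ℝ) * (θ - α))
  set ε := min (c / (2 * 4 * K)) (1 / 2)
  have hε : 0 ≤ ε := le_min (by positivity) (by norm_num)
  have hK : (L : ℝ) ^ (-(n : ℝ) * (θ - α)) = K⁻¹ := by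
    rw [neg_mul, Real.rpow_neg (by positivity)]
  have hstep : 4 * ε ≤ c * K⁻¹ / 2 :=
    calc 4 * ε ≤ 4 * (c / (2 * 4 * K)) := by gcongr; exact min_le_left _ _
      _ = c * K⁻¹ / 2 := by field_simp
  refine (hmgf n hn ε hε (min_le_right _ _)).trans (ENNReal.ofReal_le_ofReal ?_)
  rw [hK]
  calc 1 + ε * (1 - c * K⁻¹) + 4 * ε ^ 2 ≤ Real.exp (ε * (1 - c * K⁻¹ / 2)) :=
        Real.one_add_mul_add_mul_sq_le_exp hε hstep
    _ = Real.exp (ε * (1 - c / 2 * K⁻¹)) := by ring_nf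

/-- Moment generating function bounds for `W₁^{(n)}`. -/
theorem mgf_W_one_bounds
    (d L : ℕ) (hd : 1 ≤ d) (hL : 2 ≤ L)
    (A1 A2 α : ℝ) (hA1 : 0 < A1) (hA12 : A1 ≤ A2)
    (hα0 : 0 < α) (hαd : α < (d : ℝ))
    (ρ : ℝ → ℝ) (hρ0 : ρ 0 = 0)
    (hρnn : ∀ r : ℝ, 0 ≤ r → 0 ≤ ρ r)
    (hρlb : ∀ r : ℝ, 1 ≤ r → A1 * r ^ (-α) ≤ ρ r)
    (hρub : ∀ r : ℝ, 1 ≤ r → ρ r ≤ A2 * r ^ (-α))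
    (θ : ℝ) (hα56 : α < 5 * (d : ℝ) / 6) (hθα : α < θ)
    (hθ1 : α ≤ (d : ℝ) / 2 → θ < 4 * α / 3)
    (hθ2 : (d : ℝ) / 2 < α → α ≤ 2 * (d : ℝ) / 3 → θ < 2 * α - (d : ℝ) / 2)
    (hθ3 : 2 * (d : ℝ) / 3 < α → θ < 5 * α / 2 - (d : ℝ))
    (ζ : ℕ → ℝ) (hζpos : ∀ n : ℕ, 1 ≤ n → 0 < ζ n)
    (hζeq : ∀ n : ℕ, 1 ≤ n → zetaEq d L ρ n (ζ n))
    {Ω : Type} [MeasurableSpace Ω] (P : Measure Ω) [IsProbabilityMeasure P]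
    (X : ℕ → ℕ → Ω → ℕ)
    (hXmeas : ∀ n i, Measurable (X n i))
    (hXindep : ∀ n : ℕ, iIndepFun (X n) P)
    (hXdist : ∀ n i : ℕ, 1 ≤ i → i ≤ n → ∀ k : ℕ,
      P {ω | X n i ω = k} =
        ENNReal.ofReal (((L ^ (i * d) - L ^ ((i - 1) * d)).choose k : ℝ) *
          pMinus L θ ρ ζ n ((L : ℝ) ^ i) ^ k *
          (1 - pMinus L θ ρ ζ n ((L : ℝ) ^ i)) ^ (L ^ (i * d) - L ^ ((i - 1) * d) - k)))
 :
    ∃ c₁ c₂ C : ℝ, 0 < c₁ ∧ 0 < c₂ ∧ 0 < C ∧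
      (∀ n : ℕ, 1 ≤ n → ∀ t : ℝ, 0 ≤ t → t ≤ 1 / 2 →
        ∫⁻ ω, ENNReal.ofReal
            (Real.exp (t * ((∑ i ∈ Finset.Icc 1 n, X n i ω : ℕ) : ℝ))) ∂P ≤
          ENNReal.ofReal
            (1 + t * (1 - c₁ * (L : ℝ) ^ (-(n : ℝ) * (θ - α))) + C * t ^ 2)) ∧
      (∀ n : ℕ, 1 ≤ n →
        ∫⁻ ω, ENNReal.ofReal
            (Real.exp (min (c₁ / (2 * C * (L : ℝ) ^ ((n : ℝ) * (θ - α)))) (1 / 2) *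
              ((∑ i ∈ Finset.Icc 1 n, X n i ω : ℕ) : ℝ))) ∂P ≤
          ENNReal.ofReal
            (Real.exp (min (c₁ / (2 * C * (L : ℝ) ^ ((n : ℝ) * (θ - α)))) (1 / 2) *
              (1 - c₂ * (L : ℝ) ^ (-(n : ℝ) * (θ - α)))))) :=
  mgf_W_one_bounds_general d L hd hL A1 A2 α hA1 hA12 hα0 hαd ρ hρnn hρlb hρub θ hθα ζ hζpos hζeq P
    X hXmeas hXindep hXdist

end
end
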